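/- Let Xin, Xnot, X⁺ and Z be jointly distributed random variables taking values in nonempty finite types, and write X = (Xin, Xnot). Assume (i) Z and Xnot are conditionally independent given (Xin, X⁺), and (ii) X⁺ and Xnot are conditionally independent given Xin. Then the augmented mutual information factorizes as a superposition of three entropy terms: Iaug(X; X⁺; Z) = −H(X⁺ ∣ Xin) − H(Z ∣ (Xin, X⁺)) + H(Z). (Theorem 2 of the paper.) -/
import Mathlib


open Real

/-- `p` is a probability mass function on the finite type `Ω`. -/
def IsPmf {Ω : Type*} [Fintype Ω] (p : Ω → ℝ) : Prop :=
  (∀ ω, 0 ≤ p ω) ∧ ∑ ω, p ω = 1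

/-- Shannon entropy of a pmf `q` on a finite type, with the convention `0 · log 0 = 0`. -/
noncomputable def entFun {S : Type*} [Fintype S] (q : S → ℝ) : ℝ :=
  ∑ s, Real.negMulLog (q s)

/-- The (marginal) distribution of the random variable `f : Ω → S` under `p`. -/
noncomputable def distOf {Ω S : Type*} [Fintype Ω] [Fintype S] [DecidableEq S]
    (p : Ω → ℝ) (f : Ω → S) : S → ℝ :=
  fun s => ∑ ω, if f ω = s then p ω else 0

/-- Entropy `H(f)` of a (jointly distributed) random variable: the entropy of its marginal. -/
noncomputable def entOf {Ω S : Type*} [Fintype Ω] [Fintype S] [DecidableEq S]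
    (p : Ω → ℝ) (f : Ω → S) : ℝ :=
  entFun (distOf p f)

/-- Conditional pmf of `f` given `g = t` :  `s ↦ p(f = s, g = t) / p(g = t)`. -/
noncomputable def condPmf {Ω S T : Type*} [Fintype Ω] [Fintype S] [DecidableEq S]
    [Fintype T] [DecidableEq T] (p : Ω → ℝ) (f : Ω → S) (g : Ω → T) (t : T) : S → ℝ :=
  fun s => distOf p (fun ω => (f ω, g ω)) (s, t) / distOf p g t

/-- Conditional entropy `H(f ∣ g) = ∑ₜ p(g = t) · H(f ∣ g = t)`. -/
noncomputable def condEntOf {Ω S T : Type*} [Fintype Ω] [Fintype S] [DecidableEq S]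
    [Fintype T] [DecidableEq T] (p : Ω → ℝ) (f : Ω → S) (g : Ω → T) : ℝ :=
  ∑ t, distOf p g t * entFun (condPmf p f g t)

/-- Mutual information `I(f;g) = H(f) − H(f ∣ g)`. -/
noncomputable def miOf {Ω S T : Type*} [Fintype Ω] [Fintype S] [DecidableEq S]
    [Fintype T] [DecidableEq T] (p : Ω → ℝ) (f : Ω → S) (g : Ω → T) : ℝ :=
  entOf p f - condEntOf p f g

/-- Augmented mutual information `Iaug(X; X⁺; Z) = H(X) − H((X,X⁺) ∣ Z)`. -/
noncomputable def miAug {Ω S S' T : Type*} [Fintype Ω] [Fintype S] [DecidableEq S]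
    [Fintype S'] [DecidableEq S'] [Fintype T] [DecidableEq T]
    (p : Ω → ℝ) (X : Ω → S) (Xp : Ω → S') (Z : Ω → T) : ℝ :=
  entOf p X - condEntOf p (fun ω => (X ω, Xp ω)) Z

/-- `f` and `g` are conditionally independent given `h` under the joint pmf `p`:
`p(f = s, g = t ∣ h = u) = p(f = s ∣ h = u) · p(g = t ∣ h = u)` for every `u` with
positive probability. -/
def CondIndep {Ω S T U : Type*} [Fintype Ω] [Fintype S] [DecidableEq S]
    [Fintype T] [DecidableEq T] [Fintype U] [DecidableEq U]
    (p : Ω → ℝ) (f : Ω → S) (g : Ω → T) (h : Ω → U) : Prop :=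
  ∀ u : U, 0 < distOf p h u → ∀ (s : S) (t : T),
    condPmf p (fun ω => (f ω, g ω)) h u (s, t) =
      condPmf p f h u s * condPmf p g h u t

section Aux

variable {Ω S T U : Type*} [Fintype Ω] [Fintype S] [DecidableEq S]
  [Fintype T] [DecidableEq T] [Fintype U] [DecidableEq U]

lemma distOf_nonneg' (p : Ω → ℝ) (hp : ∀ ω, 0 ≤ p ω) (f : Ω → S) (s : S) :
    0 ≤ distOf p f s := by
  unfold distOf
  exact Finset.sum_nonneg fun ω _ => by split <;> simp [hp ω]

lemma sum_distOf_pair (p : Ω → ℝ) (f : Ω → S) (g : Ω → T) (t : T) :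
    ∑ s, distOf p (fun ω => (f ω, g ω)) (s, t) = distOf p g t := by
  unfold distOf
  rw [Finset.sum_comm]
  refine Finset.sum_congr rfl fun ω _ => ?_
  by_cases h : g ω = t
  · rw [Finset.sum_eq_single (f ω)]
    · simp [h]
    · intro b _ hb
      rw [if_neg]
      simp only [Prod.mk.injEq, not_and]
      exact fun hc _ => absurd hc.symm hb
    · simp
  · simp [Prod.ext_iff, h]

lemma distOf_pair_le (p : Ω → ℝ) (hp : ∀ ω, 0 ≤ p ω) (f : Ω → S) (g : Ω → T)
    (s : S) (t : T) : distOf p (fun ω => (f ω, g ω)) (s, t) ≤ distOf p g t := by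
  refine Finset.sum_le_sum fun ω _ => ?_
  dsimp only
  by_cases h : g ω = t <;> simp [Prod.ext_iff, h, hp ω] <;> split <;> simp [hp ω]

lemma sum_condPmf (p : Ω → ℝ) (f : Ω → S) (g : Ω → T) (t : T)
    (h : distOf p g t ≠ 0) : ∑ s, condPmf p f g t s = 1 := by
  unfold condPmf
  rw [← Finset.sum_div, sum_distOf_pair, div_self h]

/-- Chain rule: `H(f,g) = H(g) + H(f|g)`. -/
lemma chain_rule (p : Ω → ℝ) (hp : ∀ ω, 0 ≤ p ω) (f : Ω → S) (g : Ω → T) :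
    entOf p (fun ω => (f ω, g ω)) = entOf p g + condEntOf p f g := by
  unfold entOf condEntOf entFun
  rw [Fintype.sum_prod_type, Finset.sum_comm, ← Finset.sum_add_distrib]
  refine Finset.sum_congr rfl fun t _ => ?_
  by_cases h : distOf p g t = 0
  · have hz : ∀ s, distOf p (fun ω => (f ω, g ω)) (s, t) = 0 := fun s =>
      le_antisymm (h ▸ distOf_pair_le p hp f g s t)
        (distOf_nonneg' p hp _ _)
    simp [h, hz]
  · have key : ∀ s, distOf p (fun ω => (f ω, g ω)) (s, t)
        = distOf p g t * condPmf p f g t s := fun s => by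
      unfold condPmf; field_simp
    calc ∑ s, negMulLog (distOf p (fun ω => (f ω, g ω)) (s, t))
        = ∑ s, (condPmf p f g t s * negMulLog (distOf p g t)
            + distOf p g t * negMulLog (condPmf p f g t s)) := by
          refine Finset.sum_congr rfl fun s _ => ?_
          rw [key s, negMulLog_mul]
      _ = negMulLog (distOf p g t)
            + distOf p g t * ∑ s, negMulLog (condPmf p f g t s) := by
          rw [Finset.sum_add_distrib, ← Finset.sum_mul, sum_condPmf p f g t h,
            one_mul, Finset.mul_sum]

/-- Conditional independence splits conditional entropy. -/
lemma condEnt_pair_of_condIndep (p : Ω → ℝ) (hp : ∀ ω, 0 ≤ p ω)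
    {f : Ω → S} {g : Ω → T} {h : Ω → U}
    (hi : ∀ u : U, 0 < distOf p h u → ∀ (s : S) (t : T),
      condPmf p (fun ω => (f ω, g ω)) h u (s, t) =
        condPmf p f h u s * condPmf p g h u t) :
    condEntOf p (fun ω => (f ω, g ω)) h = condEntOf p f h + condEntOf p g h := by
  unfold condEntOf
  rw [← Finset.sum_add_distrib]
  refine Finset.sum_congr rfl fun u _ => ?_
  by_cases hd : distOf p h u = 0
  · simp [hd]
  · have hpos : 0 < distOf p h u :=
      lt_of_le_of_ne (distOf_nonneg' p hp h u) (Ne.symm hd)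
    rw [← mul_add]
    congr 1
    unfold entFun
    rw [Fintype.sum_prod_type]
    have hsf := sum_condPmf p f h u hd
    have hsg := sum_condPmf p g h u hd
    calc ∑ s, ∑ t, negMulLog (condPmf p (fun ω => (f ω, g ω)) h u (s, t))
        = ∑ s, ∑ t, (condPmf p g h u t * negMulLog (condPmf p f h u s)
            + condPmf p f h u s * negMulLog (condPmf p g h u t)) := by
          refine Finset.sum_congr rfl fun s _ => Finset.sum_congr rfl fun t _ => ?_
          rw [hi u hpos s t, negMulLog_mul]
      _ = ∑ s, (negMulLog (condPmf p f h u s)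
            + condPmf p f h u s * ∑ t, negMulLog (condPmf p g h u t)) := by
          refine Finset.sum_congr rfl fun s _ => ?_
          rw [Finset.sum_add_distrib, ← Finset.sum_mul, hsg, one_mul, Finset.mul_sum]
      _ = (∑ s, negMulLog (condPmf p f h u s))
            + ∑ t, negMulLog (condPmf p g h u t) := by
          rw [Finset.sum_add_distrib, ← Finset.sum_mul, hsf, one_mul]

lemma distOf_equiv (p : Ω → ℝ) (f : Ω → S) (e : S ≃ T) (t : T) :
    distOf p (fun ω => e (f ω)) t = distOf p f (e.symm t) := by
  unfold distOf
  refine Finset.sum_congr rfl fun ω _ => ?_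
  simp [Equiv.apply_eq_iff_eq_symm_apply]

lemma entOf_equiv (p : Ω → ℝ) (f : Ω → S) (e : S ≃ T) :
    entOf p (fun ω => e (f ω)) = entOf p f := by
  unfold entOf entFun
  rw [← Equiv.sum_comp e.symm (fun s => negMulLog (distOf p f s))]
  exact Finset.sum_congr rfl fun t _ => by rw [distOf_equiv]

lemma condPmf_equiv_right (p : Ω → ℝ) (f : Ω → S) (g : Ω → T) (e : T ≃ U) (t : T) (s : S) :
    condPmf p f (fun ω => e (g ω)) (e t) s = condPmf p f g t s := by
  unfold condPmf
  congr 1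
  · unfold distOf
    refine Finset.sum_congr rfl fun ω _ => ?_
    simp [Prod.ext_iff]
  · rw [distOf_equiv]; simp

lemma condEntOf_equiv_right (p : Ω → ℝ) (f : Ω → S) (g : Ω → T) (e : T ≃ U) :
    condEntOf p f (fun ω => e (g ω)) = condEntOf p f g := by
  unfold condEntOf
  rw [← Equiv.sum_comp e (fun u => distOf p (fun ω => e (g ω)) u
    * entFun (condPmf p f (fun ω => e (g ω)) u))]
  refine Finset.sum_congr rfl fun t _ => ?_
  rw [distOf_equiv]
  simp only [Equiv.symm_apply_apply]
  congr 1
  unfold entFun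
  exact Finset.sum_congr rfl fun s _ => by rw [condPmf_equiv_right]

/-- `f ⟂ g ∣ h` implies `H(f ∣ (g,h)) = H(f ∣ h)`. -/
lemma condEnt_drop (p : Ω → ℝ) (hp : ∀ ω, 0 ≤ p ω)
    {f : Ω → S} {g : Ω → T} {h : Ω → U}
    (hi : ∀ u : U, 0 < distOf p h u → ∀ (s : S) (t : T),
      condPmf p (fun ω => (f ω, g ω)) h u (s, t) =
        condPmf p f h u s * condPmf p g h u t) :
    condEntOf p f (fun ω => (g ω, h ω)) = condEntOf p f h := by
  have c1 : entOf p (fun ω => (f ω, (g ω, h ω)))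
      = entOf p (fun ω => (g ω, h ω)) + condEntOf p f (fun ω => (g ω, h ω)) :=
    chain_rule p hp _ _
  have c2 : entOf p (fun ω => ((f ω, g ω), h ω))
      = entOf p h + condEntOf p (fun ω => (f ω, g ω)) h := chain_rule p hp _ _
  have c3 : entOf p (fun ω => (g ω, h ω)) = entOf p h + condEntOf p g h :=
    chain_rule p hp _ _
  have c4 : condEntOf p (fun ω => (f ω, g ω)) h = condEntOf p f h + condEntOf p g h :=
    condEnt_pair_of_condIndep p hp hi
  have e1 : entOf p (fun ω => (f ω, (g ω, h ω)))
      = entOf p (fun ω => ((f ω, g ω), h ω)) :=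
    entOf_equiv p (fun ω => ((f ω, g ω), h ω)) (Equiv.prodAssoc S T U)
  linarith

end Aux

/-- An ad-hoc shuffle equivalence `B × (A × C) ≃ (A × B) × C`. -/
def pairShuffle (A B C : Type*) : B × (A × C) ≃ (A × B) × C where
  toFun x := ((x.2.1, x.1), x.2.2)
  invFun y := (y.1.2, (y.1.1, y.2))
  left_inv x := rfl
  right_inv y := rfl

/-- **Theorem 2.** Under (i) `Z ⟂ Xnot ∣ (Xin, X⁺)` and (ii) `X⁺ ⟂ Xnot ∣ Xin`, with
`X = (Xin, Xnot)`, the augmented MI factorizes as a superposition of entropy terms: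
`Iaug(X; X⁺; Z) = −H(X⁺ ∣ Xin) − H(Z ∣ (Xin, X⁺)) + H(Z)`. -/
theorem miAug_superposition
    {Xin Xnot Xp Z : Type*}
    [Fintype Xin] [DecidableEq Xin] [Nonempty Xin]
    [Fintype Xnot] [DecidableEq Xnot] [Nonempty Xnot]
    [Fintype Xp] [DecidableEq Xp] [Nonempty Xp]
    [Fintype Z] [DecidableEq Z] [Nonempty Z]
    (p : Xin × Xnot × Xp × Z → ℝ) (hp : IsPmf p)
    (hZ : CondIndep p (fun ω => ω.2.2.2) (fun ω => ω.2.1) (fun ω => (ω.1, ω.2.2.1)))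
    (hXp : CondIndep p (fun ω => ω.2.2.1) (fun ω => ω.2.1) (fun ω => ω.1)) :
    miAug p (fun ω => (ω.1, ω.2.1)) (fun ω => ω.2.2.1) (fun ω => ω.2.2.2)
      = - condEntOf p (fun ω => ω.2.2.1) (fun ω => ω.1)
        - condEntOf p (fun ω => ω.2.2.2) (fun ω => (ω.1, ω.2.2.1))
        + entOf p (fun ω => ω.2.2.2) := by
  obtain ⟨hp0, -⟩ := hp
  have h1 : entOf p (fun ω => (((ω.1, ω.2.1), ω.2.2.1), ω.2.2.2))
      = entOf p (fun ω => ω.2.2.2)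
        + condEntOf p (fun ω => ((ω.1, ω.2.1), ω.2.2.1)) (fun ω => ω.2.2.2) :=
    chain_rule p hp0 _ _
  have e2 : entOf p (fun ω => (ω.2.2.2, ((ω.1, ω.2.1), ω.2.2.1)))
      = entOf p (fun ω => (((ω.1, ω.2.1), ω.2.2.1), ω.2.2.2)) :=
    entOf_equiv p (fun ω => (((ω.1, ω.2.1), ω.2.2.1), ω.2.2.2)) (Equiv.prodComm _ _)
  have c2 : entOf p (fun ω => (ω.2.2.2, ((ω.1, ω.2.1), ω.2.2.1)))
      = entOf p (fun ω => ((ω.1, ω.2.1), ω.2.2.1))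
        + condEntOf p (fun ω => ω.2.2.2) (fun ω => ((ω.1, ω.2.1), ω.2.2.1)) :=
    chain_rule p hp0 _ _
  have e3 : condEntOf p (fun ω => ω.2.2.2) (fun ω => ((ω.1, ω.2.1), ω.2.2.1))
      = condEntOf p (fun ω => ω.2.2.2) (fun ω => (ω.2.1, (ω.1, ω.2.2.1))) :=
    condEntOf_equiv_right p (fun ω => ω.2.2.2)
      (fun ω => (ω.2.1, (ω.1, ω.2.2.1))) (pairShuffle _ _ _)
  have h4 : condEntOf p (fun ω => ω.2.2.2) (fun ω => (ω.2.1, (ω.1, ω.2.2.1)))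
      = condEntOf p (fun ω => ω.2.2.2) (fun ω => (ω.1, ω.2.2.1)) :=
    condEnt_drop p hp0 hZ
  have e5 : entOf p (fun ω => (ω.2.2.1, (ω.1, ω.2.1)))
      = entOf p (fun ω => ((ω.1, ω.2.1), ω.2.2.1)) :=
    entOf_equiv p (fun ω => ((ω.1, ω.2.1), ω.2.2.1)) (Equiv.prodComm _ _)
  have c5 : entOf p (fun ω => (ω.2.2.1, (ω.1, ω.2.1)))
      = entOf p (fun ω => (ω.1, ω.2.1))
        + condEntOf p (fun ω => ω.2.2.1) (fun ω => (ω.1, ω.2.1)) :=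
    chain_rule p hp0 _ _
  have e6 : condEntOf p (fun ω => ω.2.2.1) (fun ω => (ω.1, ω.2.1))
      = condEntOf p (fun ω => ω.2.2.1) (fun ω => (ω.2.1, ω.1)) :=
    condEntOf_equiv_right p (fun ω => ω.2.2.1)
      (fun ω => (ω.2.1, ω.1)) (Equiv.prodComm _ _)
  have h7 : condEntOf p (fun ω => ω.2.2.1) (fun ω => (ω.2.1, ω.1))
      = condEntOf p (fun ω => ω.2.2.1) (fun ω => ω.1) :=
    condEnt_drop p hp0 hXp
  simp only [miAug]
  linarith
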